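/- Let Q = {x ∈ ℝⁿ : Ax ≤ b} be a nonempty polyhedron, z ∈ vrt(Q) a nondegenerate vertex (exactly n active constraints, with A_{J(z)} invertible), T = N(z), and let S = S_T ∈ ℝ^{n×n} be the invertible matrix whose rows are the inward unit facet normals of T (the normalized columns of A_{J(z)}^{−1}). Let ψ be proper convex and ε ≥ 0. Then for any w ∈ ∂(εψ)(z), with representer w̃ := S^{−1}(Sw)₊, γ(T ∩ [T + ∂(εψ)(z)]) ≥ γ(T) · exp(−½‖w̃‖² − ‖w̃‖√n). If moreover ψ is differentiable at z, then with w̃ := S^{−1}[S(ε∇ψ(z))]₊, γ(T ∩ [T + ε∇ψ(z)]) ≤ γ(T) · exp(−½‖proj_{T*} w̃‖² + dist(w̃, T*)·√n). -/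

import Mathlib

/-!
With `T = {y | ∀ i, 0 ≤ ⟪sᵢ, y⟫}`, the representer satisfies `w̃ ∈ T` and `w̃ - w ∈ T`, so
`T + w̃ ⊆ T ∩ (T + ∂(εψ)(z))`, and likewise `T ∩ (T + εv) ⊆ T + w̃`. Everything thus reduces to
comparing `γ(T + u)` with `γ(T)`. Write `γ(T + u) = ∫_T φ(y) e^{-⟪y,u⟫ - ‖u‖²/2} dy` and bound
`-⟪y,u⟫` below by `-‖u‖‖y‖`, and above by `‖u - p‖‖y‖` when `p ∈ T*`; for the projection `p`
one has `‖p‖² + ‖u - p‖² ≤ ‖u‖²`. This leaves the exponential moments `∫_T φ(y) e^{t‖y‖} dy`,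
which in polar coordinates are `C e^{t²/2} K(t)` with `K = K_{n-1}`, where
`K_k(t) = ∫₀^∞ rᵏ e^{-(r-t)²/2} dr` (`halfGaussMoment`). Integration by parts gives
`K_{k+2} = (k+1) K_k + t K_{k+1}` and `K_k' = K_{k+1} - t K_k`. Together with
`∫₀^∞ rᵏ (r - l)² e^{-(r-t)²/2} dr ≥ 0`, they bound on `[0, ∞)` the logarithmic derivative of
`t ↦ e^{t²/2} K(-t)` below by `-√n` and that of `K` above by `√n`. Grönwall's inequality then
gives `e^{τ²/2} K(-τ) ≥ K(0) e^{-√n τ}` and `K(d) ≤ K(0) e^{√n d}`.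
-/

open MeasureTheory Set Metric Pointwise RealInnerProductSpace

noncomputable section

/-- Normal cone of a convex set `Q` at a point `z`. -/
def normalCone {n : ℕ} (Q : Set (EuclideanSpace ℝ (Fin n))) (z : EuclideanSpace ℝ (Fin n)) :
    Set (EuclideanSpace ℝ (Fin n)) :=
  {v | ∀ y ∈ Q, ⟪v, y - z⟫ ≤ 0}

/-- Dual cone of a set. -/
def dualCone {n : ℕ} (V : Set (EuclideanSpace ℝ (Fin n))) : Set (EuclideanSpace ℝ (Fin n)) :=
  {y | ∀ x ∈ V, 0 ≤ ⟪x, y⟫}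

/-- Standard Gaussian measure of a set in `ℝⁿ`. -/
def gauss {n : ℕ} (B : Set (EuclideanSpace ℝ (Fin n))) : ℝ :=
  ∫ x in B, (2 * Real.pi) ^ (-(n : ℝ) / 2) * Real.exp (-‖x‖ ^ 2 / 2)

/-- Subdifferential at `z` of the proper convex function equal to `ψ` on `D` and `+∞` off `D`. -/
def subdiff {n : ℕ} (D : Set (EuclideanSpace ℝ (Fin n))) (ψ : EuclideanSpace ℝ (Fin n) → ℝ)
    (z : EuclideanSpace ℝ (Fin n)) : Set (EuclideanSpace ℝ (Fin n)) :=
  {w | z ∈ D ∧ ∀ y ∈ D, ψ z + ⟪w, y - z⟫ ≤ ψ y}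

/-- `∂(εψ)(z)`: equals `ε ∂ψ(z)` for `ε > 0` and the normal cone of `dom ψ = D` at `z`
for `ε = 0`. -/
def subdiffScaled {n : ℕ} (ε : ℝ) (D : Set (EuclideanSpace ℝ (Fin n)))
    (ψ : EuclideanSpace ℝ (Fin n) → ℝ) (z : EuclideanSpace ℝ (Fin n)) :
    Set (EuclideanSpace ℝ (Fin n)) :=
  if ε = 0 then {w | z ∈ D ∧ ∀ y ∈ D, ⟪w, y - z⟫ ≤ 0}
  else (fun w => ε • w) '' subdiff D ψ z

open Real Filter Topology
open scoped Nat

lemma le_of_hasDerivAt_nonneg {f f' : ℝ → ℝ} (hf : ∀ x, HasDerivAt f (f' x) x)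
    (hf' : ∀ x, 0 ≤ x → 0 ≤ f' x) {a : ℝ} (ha : 0 ≤ a) : f 0 ≤ f a := by
  have hmono : MonotoneOn f (Ici 0) :=
    monotoneOn_of_deriv_nonneg (convex_Ici 0)
      (HasDerivAt.continuousOn fun x _ => hf x)
      (fun x _ => (hf x).differentiableAt.differentiableWithinAt)
      (fun x hx => by
        rw [interior_Ici] at hx
        exact (hf x).deriv ▸ hf' x (le_of_lt hx))
  exact hmono self_mem_Ici ha ha

lemma mul_exp_le_of_hasDerivAt {f f' : ℝ → ℝ} {c : ℝ} (hf : ∀ x, HasDerivAt f (f' x) x)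
    (hf' : ∀ x, 0 ≤ x → c * f x ≤ f' x) {a : ℝ} (ha : 0 ≤ a) : f 0 * exp (c * a) ≤ f a := by
  have hg : ∀ x, HasDerivAt (fun x => f x * exp (-c * x))
      ((f' x - c * f x) * exp (-c * x)) x := fun x => by
    refine ((hf x).mul ((hasDerivAt_id x).const_mul (-c)).exp).congr_deriv ?_
    simp only [id]
    ring
  have h := le_of_hasDerivAt_nonneg hg
    (fun x hx => mul_nonneg (sub_nonneg.2 (hf' x hx)) (exp_pos _).le) ha
  simp only [mul_zero, exp_zero, mul_one] at h
  calc f 0 * exp (c * a) ≤ f a * exp (-c * a) * exp (c * a) := by gcongr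
    _ = f a := by rw [mul_assoc, ← exp_add]; simp

lemma le_mul_exp_of_hasDerivAt {f f' : ℝ → ℝ} {c : ℝ} (hf : ∀ x, HasDerivAt f (f' x) x)
    (hf' : ∀ x, 0 ≤ x → f' x ≤ c * f x) {a : ℝ} (ha : 0 ≤ a) : f a ≤ f 0 * exp (c * a) := by
  have := mul_exp_le_of_hasDerivAt (f := fun x => -f x) (fun x => (hf x).neg)
    (c := c) (fun x hx => by linarith [hf' x hx]) ha
  linarith

lemma pow_mul_exp_le_factorial_mul_exp (k : ℕ) {c r : ℝ} (hr : 0 ≤ r) :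
    r ^ k * exp (c * r - r ^ 2 / 2) ≤ k ! * exp ((c + 1) ^ 2) * exp (-(1 / 4) * r ^ 2) := by
  have hpow : r ^ k ≤ k ! * exp r := by
    have := pow_div_factorial_le_exp r hr k
    rwa [div_le_iff₀' (by positivity)] at this
  calc r ^ k * exp (c * r - r ^ 2 / 2) ≤ k ! * exp r * exp (c * r - r ^ 2 / 2) := by gcongr
    _ = k ! * exp ((c + 1) * r - r ^ 2 / 2) := by rw [mul_assoc, ← exp_add]; ring_nf
    _ ≤ k ! * exp ((c + 1) ^ 2 + -(1 / 4) * r ^ 2) := by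
        gcongr
        nlinarith [sq_nonneg (c + 1 - r / 2)]
    _ = _ := by rw [exp_add, mul_assoc]

lemma exp_neg_sq_sub_le (t : ℝ) {r : ℝ} (hr : 0 ≤ r) :
    exp (-(r - t) ^ 2 / 2) ≤ exp (|t| * r - r ^ 2 / 2) := by
  gcongr
  nlinarith [sq_nonneg t, mul_le_mul_of_nonneg_right (le_abs_self t) hr]

lemma pow_mul_exp_neg_sq_sub_le (k : ℕ) {c t r : ℝ} (ht : |t| ≤ c) (hr : 0 ≤ r) :
    r ^ k * exp (-(r - t) ^ 2 / 2) ≤ k ! * exp ((c + 1) ^ 2) * exp (-(1 / 4) * r ^ 2) :=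
  calc r ^ k * exp (-(r - t) ^ 2 / 2) ≤ r ^ k * exp (c * r - r ^ 2 / 2) := by
        refine mul_le_mul_of_nonneg_left ?_ (by positivity)
        refine (exp_neg_sq_sub_le t hr).trans (exp_le_exp.2 ?_)
        nlinarith
    _ ≤ _ := pow_mul_exp_le_factorial_mul_exp k hr

def halfGaussMoment (k : ℕ) (t : ℝ) : ℝ := ∫ r in Ioi 0, r ^ k * exp (-(r - t) ^ 2 / 2)

lemma integrableOn_pow_mul_exp_neg_sq_sub (k : ℕ) (t : ℝ) :
    IntegrableOn (fun r : ℝ => r ^ k * exp (-(r - t) ^ 2 / 2)) (Ioi 0) := by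
  refine Integrable.mono' (((integrable_exp_neg_mul_sq (by norm_num : (0 : ℝ) < 1 / 4)).const_mul
    (k ! * exp ((|t| + 1) ^ 2))).integrableOn) (Continuous.aestronglyMeasurable (by fun_prop)) ?_
  filter_upwards [ae_restrict_mem measurableSet_Ioi] with r hr
  have hr0 : (0 : ℝ) ≤ r := le_of_lt hr
  rw [norm_of_nonneg (by positivity)]
  exact pow_mul_exp_neg_sq_sub_le k le_rfl hr0

lemma tendsto_pow_mul_exp_neg_sq_sub_atTop (k : ℕ) (t : ℝ) :
    Tendsto (fun r : ℝ => r ^ k * exp (-(r - t) ^ 2 / 2)) atTop (𝓝 0) := by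
  have hbound : Tendsto (fun r : ℝ => k ! * exp ((|t| + 1) ^ 2) * exp (-(1 / 4) * r ^ 2))
      atTop (𝓝 0) := by
    simpa using ((tendsto_exp_atBot.comp ((tendsto_pow_atTop two_ne_zero).const_mul_atTop_of_neg
      (by norm_num : -(1 / 4 : ℝ) < 0))).const_mul (k ! * exp ((|t| + 1) ^ 2)))
  refine squeeze_zero' ?_ ?_ hbound <;> filter_upwards [eventually_ge_atTop 0] with r hr
  · positivity
  · exact pow_mul_exp_neg_sq_sub_le k le_rfl hr

lemma hasDerivAt_exp_neg_sq_sub (t r : ℝ) :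
    HasDerivAt (fun r => exp (-(r - t) ^ 2 / 2)) (-(r - t) * exp (-(r - t) ^ 2 / 2)) r := by
  have h : HasDerivAt (fun r : ℝ => -(r - t) ^ 2 / 2) (-(r - t)) r := by
    refine ((((hasDerivAt_id r).sub_const t).pow 2).neg.div_const 2).congr_deriv ?_
    simp only [id]
    ring
  simpa [mul_comm] using h.exp

lemma halfGaussMoment_nonneg (k : ℕ) (t : ℝ) : 0 ≤ halfGaussMoment k t :=
  setIntegral_nonneg measurableSet_Ioi fun r hr => by
    have : (0 : ℝ) < r := hr
    positivity

lemma integral_poly_mul_exp_neg_sq_sub (k : ℕ) (t a b c : ℝ) :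
    ∫ r in Ioi 0, (a * r ^ k + b * r ^ (k + 1) + c * r ^ (k + 2)) * exp (-(r - t) ^ 2 / 2) =
      a * halfGaussMoment k t + b * halfGaussMoment (k + 1) t + c * halfGaussMoment (k + 2) t := by
  have I := integrableOn_pow_mul_exp_neg_sq_sub
  have hab : IntegrableOn (fun r => a * (r ^ k * exp (-(r - t) ^ 2 / 2))
      + b * (r ^ (k + 1) * exp (-(r - t) ^ 2 / 2))) (Ioi 0) :=
    ((I k t).const_mul a).add ((I (k + 1) t).const_mul b)
  rw [integral_congr_ae (g := fun r => a * (r ^ k * exp (-(r - t) ^ 2 / 2))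
      + b * (r ^ (k + 1) * exp (-(r - t) ^ 2 / 2)) + c * (r ^ (k + 2) * exp (-(r - t) ^ 2 / 2)))
      (Eventually.of_forall fun r => by ring),
    integral_add hab ((I (k + 2) t).const_mul c),
    integral_add ((I k t).const_mul a) ((I (k + 1) t).const_mul b),
    integral_const_mul, integral_const_mul, integral_const_mul]
  rfl

lemma integrableOn_poly_mul_exp_neg_sq_sub (k : ℕ) (t a b c : ℝ) :
    IntegrableOn (fun r => (a * r ^ k + b * r ^ (k + 1) + c * r ^ (k + 2)) * exp (-(r - t) ^ 2 / 2))
      (Ioi 0) := by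
  have I := integrableOn_pow_mul_exp_neg_sq_sub
  refine IntegrableOn.congr_fun ((((I k t).const_mul a).add ((I (k + 1) t).const_mul b)).add
    ((I (k + 2) t).const_mul c)) (fun r _ => ?_) measurableSet_Ioi
  simp only [Pi.add_apply]
  ring

/-- Integration by parts against `∂ᵣ e^{-(r-t)²/2} = -(r - t) e^{-(r-t)²/2}`. -/
lemma halfGaussMoment_add_two (k : ℕ) (t : ℝ) :
    halfGaussMoment (k + 2) t = (k + 1) * halfGaussMoment k t + t * halfGaussMoment (k + 1) t := by
  have hderiv : ∀ r, HasDerivAt (fun r : ℝ => r ^ (k + 1) * exp (-(r - t) ^ 2 / 2))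
      (((k + 1) * r ^ k + t * r ^ (k + 1) + (-1) * r ^ (k + 2)) * exp (-(r - t) ^ 2 / 2)) r :=
    fun r => ((hasDerivAt_pow (k + 1) r).mul (hasDerivAt_exp_neg_sq_sub t r)).congr_deriv
      (by push_cast; ring)
  have key := integral_Ioi_of_hasDerivAt_of_tendsto (Continuous.continuousWithinAt (by fun_prop))
    (fun r _ => hderiv r) (integrableOn_poly_mul_exp_neg_sq_sub k t _ _ _)
    (tendsto_pow_mul_exp_neg_sq_sub_atTop (k + 1) t)
  rw [integral_poly_mul_exp_neg_sq_sub] at key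
  simp only [ne_eq, add_eq_zero, one_ne_zero, and_false, not_false_eq_true, zero_pow, zero_mul,
    sub_zero] at key
  linarith

lemma halfGaussMoment_one (t : ℝ) :
    halfGaussMoment 1 t = t * halfGaussMoment 0 t + exp (-t ^ 2 / 2) := by
  have hderiv : ∀ r, HasDerivAt (fun r : ℝ => exp (-(r - t) ^ 2 / 2))
      ((t * r ^ 0 + (-1) * r ^ (0 + 1) + 0 * r ^ (0 + 2)) * exp (-(r - t) ^ 2 / 2)) r :=
    fun r => (hasDerivAt_exp_neg_sq_sub t r).congr_deriv (by ring)
  have key := integral_Ioi_of_hasDerivAt_of_tendsto (Continuous.continuousWithinAt (by fun_prop))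
    (fun r _ => hderiv r) (integrableOn_poly_mul_exp_neg_sq_sub 0 t _ _ _)
    (by simpa only [pow_zero, one_mul] using tendsto_pow_mul_exp_neg_sq_sub_atTop 0 t)
  rw [integral_poly_mul_exp_neg_sq_sub] at key
  simp only [zero_sub, even_two, Even.neg_pow] at key
  linarith

lemma norm_sub_mul_pow_mul_exp_neg_sq_sub_le (k : ℕ) {c t r : ℝ} (ht : |t| ≤ c) (hr : 0 ≤ r) :
    ‖(r - t) * r ^ k * exp (-(r - t) ^ 2 / 2)‖ ≤
      ((k + 1)! + c * k !) * exp ((c + 1) ^ 2) * exp (-(1 / 4) * r ^ 2) := by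
  have hrt : |r - t| ≤ r + c := (abs_sub _ _).trans (by rw [abs_of_nonneg hr]; linarith)
  have hc : 0 ≤ c := (abs_nonneg t).trans ht
  calc ‖(r - t) * r ^ k * exp (-(r - t) ^ 2 / 2)‖
      = |r - t| * (r ^ k * exp (-(r - t) ^ 2 / 2)) := by
        rw [mul_assoc, norm_mul, Real.norm_eq_abs, norm_of_nonneg (by positivity)]
    _ ≤ (r + c) * (r ^ k * exp (-(r - t) ^ 2 / 2)) := by gcongr
    _ = r ^ (k + 1) * exp (-(r - t) ^ 2 / 2) + c * (r ^ k * exp (-(r - t) ^ 2 / 2)) := by ring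
    _ ≤ _ := by
        have := mul_le_mul_of_nonneg_left (pow_mul_exp_neg_sq_sub_le k ht hr) hc
        have := pow_mul_exp_neg_sq_sub_le (k + 1) ht hr
        linarith

lemma hasDerivAt_halfGaussMoment (k : ℕ) (t : ℝ) :
    HasDerivAt (halfGaussMoment k) (halfGaussMoment (k + 1) t - t * halfGaussMoment k t) t := by
  set c := |t| + 1
  have key := hasDerivAt_integral_of_dominated_loc_of_deriv_le
    (μ := volume.restrict (Ioi 0)) (ball_mem_nhds t one_pos)
    (F := fun t' r => r ^ k * exp (-(r - t') ^ 2 / 2))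
    (F' := fun t' r => (r - t') * r ^ k * exp (-(r - t') ^ 2 / 2))
    (bound := fun r => ((k + 1)! + c * k !) * exp ((c + 1) ^ 2) * exp (-(1 / 4) * r ^ 2))
    (Eventually.of_forall fun _ => (Continuous.aestronglyMeasurable (by fun_prop)))
    (integrableOn_pow_mul_exp_neg_sq_sub k t) (Continuous.aestronglyMeasurable (by fun_prop)) ?_
    ((integrable_exp_neg_mul_sq (by norm_num : (0 : ℝ) < 1 / 4)).const_mul _).integrableOn ?_
  · have hval : ∫ r in Ioi 0, (r - t) * r ^ k * exp (-(r - t) ^ 2 / 2) =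
        halfGaussMoment (k + 1) t - t * halfGaussMoment k t := by
      calc _ = ∫ r in Ioi 0, (-t * r ^ k + 1 * r ^ (k + 1) + 0 * r ^ (k + 2)) *
            exp (-(r - t) ^ 2 / 2) := setIntegral_congr_fun measurableSet_Ioi fun r _ => by ring
        _ = _ := by rw [integral_poly_mul_exp_neg_sq_sub]; ring
    exact hval ▸ key.2
  · filter_upwards [ae_restrict_mem measurableSet_Ioi] with r hr t' ht'
    refine norm_sub_mul_pow_mul_exp_neg_sq_sub_le k ?_ (le_of_lt hr)
    have := abs_sub_abs_le_abs_sub t' t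
    rw [mem_ball, Real.dist_eq] at ht'
    linarith
  · filter_upwards with r t' _
    have h : HasDerivAt (fun t' => -(r - t') ^ 2 / 2) (r - t') t' := by
      refine ((((hasDerivAt_id t').const_sub r).pow 2).neg.div_const 2).congr_deriv ?_
      simp only [id]
      ring
    exact (h.exp.const_mul (r ^ k)).congr_deriv (by ring)

lemma hasDerivAt_halfGaussMoment_succ (k : ℕ) (t : ℝ) :
    HasDerivAt (halfGaussMoment (k + 1)) ((k + 1) * halfGaussMoment k t) t :=
  (hasDerivAt_halfGaussMoment (k + 1) t).congr_deriv (by rw [halfGaussMoment_add_two]; ring)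

lemma halfGaussMoment_quadratic_nonneg (k : ℕ) (t l : ℝ) :
    0 ≤ l ^ 2 * halfGaussMoment k t - 2 * l * halfGaussMoment (k + 1) t
      + halfGaussMoment (k + 2) t := by
  have key : 0 ≤ l ^ 2 * halfGaussMoment k t + -(2 * l) * halfGaussMoment (k + 1) t
      + 1 * halfGaussMoment (k + 2) t := by
    rw [← integral_poly_mul_exp_neg_sq_sub]
    refine setIntegral_nonneg measurableSet_Ioi fun r hr => ?_
    have hr0 : (0 : ℝ) < r := hr
    have : l ^ 2 * r ^ k + -(2 * l) * r ^ (k + 1) + 1 * r ^ (k + 2) = r ^ k * (r - l) ^ 2 := by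
      ring
    rw [this]
    positivity
  linarith

lemma halfGaussMoment_succ_le_of_nonpos (k : ℕ) {t : ℝ} (ht : t ≤ 0) :
    halfGaussMoment (k + 1) t ≤ √(k + 1) * halfGaussMoment k t := by
  have hq := halfGaussMoment_quadratic_nonneg k t √(k + 1)
  rw [sq_sqrt (by positivity), halfGaussMoment_add_two] at hq
  have hpos : 0 < √((k : ℝ) + 1) := sqrt_pos.2 (by positivity)
  have hsq : √((k : ℝ) + 1) * √(k + 1) = k + 1 := mul_self_sqrt (by positivity)
  refine le_of_mul_le_mul_left ?_ hpos
  rw [← mul_assoc, hsq]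
  nlinarith [mul_nonpos_of_nonpos_of_nonneg ht (halfGaussMoment_nonneg (k + 1) t)]

lemma one_le_halfGaussMoment_zero {d : ℝ} (hd : 0 ≤ d) : 1 ≤ halfGaussMoment 0 d := by
  have hmono := le_of_hasDerivAt_nonneg (hasDerivAt_halfGaussMoment 0)
    (fun x _ => by rw [halfGaussMoment_one]; simp only [add_sub_cancel_left]; positivity) hd
  have h1 : halfGaussMoment 1 0 ≤ halfGaussMoment 0 0 := by
    simpa using halfGaussMoment_succ_le_of_nonpos 0 le_rfl
  have h10 : halfGaussMoment 1 0 = 1 := by simp [halfGaussMoment_one]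
  linarith

/-- The left side is the derivative of `halfGaussMoment j`. For the induction step,
`√(N+1) K_{j+1} - (j+1) K_j` has derivative `(j+1) (√(N+1) K_j - K_j')`, nonnegative by the
induction hypothesis, and is nonnegative at `0` since
`(j+1) K_j(0) = K_{j+2}(0) ≤ √(j+2) K_{j+1}(0)`. -/
lemma halfGaussMoment_succ_sub_le {N j : ℕ} (hj : j ≤ N) {d : ℝ} (hd : 0 ≤ d) :
    halfGaussMoment (j + 1) d - d * halfGaussMoment j d ≤ √(N + 1) * halfGaussMoment j d := by
  induction j generalizing d with
  | zero =>
    rw [halfGaussMoment_one, add_sub_cancel_left]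
    have h1 : (1 : ℝ) ≤ √(N + 1) := one_le_sqrt.2 (by linarith [N.cast_nonneg (α := ℝ)])
    have h2 : exp (-d ^ 2 / 2) ≤ 1 := exp_le_one_iff.2 (by nlinarith)
    nlinarith [one_le_halfGaussMoment_zero hd]
  | succ j ih =>
    set c := √((N : ℝ) + 1)
    have hG := le_of_hasDerivAt_nonneg (f := fun x => c * halfGaussMoment (j + 1) x
        - (j + 1) * halfGaussMoment j x)
      (fun x => ((hasDerivAt_halfGaussMoment_succ j x).const_mul c).sub
        ((hasDerivAt_halfGaussMoment j x).const_mul _))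
      (fun x hx => by nlinarith [ih (by omega) hx]) hd
    have hG0 : halfGaussMoment (j + 2) 0 ≤ c * halfGaussMoment (j + 1) 0 := by
      refine (halfGaussMoment_succ_le_of_nonpos (j + 1) le_rfl).trans ?_
      gcongr
      · exact halfGaussMoment_nonneg _ _
      · exact sqrt_le_sqrt (by exact_mod_cast (by omega : j + 2 ≤ N + 1))
    rw [halfGaussMoment_add_two] at hG0 ⊢
    nlinarith

lemma halfGaussMoment_le_mul_exp (N : ℕ) {d : ℝ} (hd : 0 ≤ d) :
    halfGaussMoment N d ≤ halfGaussMoment N 0 * exp (√(N + 1) * d) :=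
  le_mul_exp_of_hasDerivAt (hasDerivAt_halfGaussMoment N)
    (fun _ hx => halfGaussMoment_succ_sub_le le_rfl hx) hd

lemma halfGaussMoment_zero_mul_exp_le (N : ℕ) {τ : ℝ} (hτ : 0 ≤ τ) :
    halfGaussMoment N 0 * exp (-√(N + 1) * τ) ≤ exp (τ ^ 2 / 2) * halfGaussMoment N (-τ) := by
  have hf : ∀ x, HasDerivAt (fun x => exp (x ^ 2 / 2) * halfGaussMoment N (-x))
      (-(exp (x ^ 2 / 2) * halfGaussMoment (N + 1) (-x))) x := fun x => by
    have he : HasDerivAt (fun x => exp (x ^ 2 / 2)) (x * exp (x ^ 2 / 2)) x :=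
      ((hasDerivAt_pow 2 x).div_const 2).exp.congr_deriv (by push_cast; ring)
    exact (he.mul ((hasDerivAt_halfGaussMoment N (-x)).comp x (hasDerivAt_neg x))).congr_deriv
      (by simp only [Function.comp_apply]; ring)
  have h := mul_exp_le_of_hasDerivAt (c := -√(N + 1)) hf (fun x hx => by
    have := halfGaussMoment_succ_le_of_nonpos N (neg_nonpos.2 hx)
    nlinarith [exp_pos (x ^ 2 / 2)]) hτ
  simpa using h

section Polar

variable {E : Type*} [NormedAddCommGroup E] [NormedSpace ℝ E] [MeasurableSpace E] [BorelSpace E]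
  [FiniteDimensional ℝ E] [Nontrivial E] (μ : Measure E) [μ.IsAddHaarMeasure]

lemma setIntegral_fun_norm_of_smul_mem {T : Set E} (hT : MeasurableSet T)
    (hcone : ∀ c : ℝ, 0 < c → ∀ x ∈ T, c • x ∈ T) (f : ℝ → ℝ) :
    ∫ x in T, f ‖x‖ ∂μ = μ.toSphere.real (Subtype.val ⁻¹' T) *
      ∫ r in Ioi (0 : ℝ), r ^ (Module.finrank ℝ E - 1) * f r := by
  set S : Set (sphere (0 : E) 1) := Subtype.val ⁻¹' T
  have hS : MeasurableSet S := hT.preimage measurable_subtype_coe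
  have hmem : ∀ x : E, x ≠ 0 → (‖x‖⁻¹ • x ∈ T ↔ x ∈ T) := fun x hx => by
    refine ⟨fun h => ?_, hcone _ (by positivity) x⟩
    simpa [smul_smul, norm_ne_zero_iff.2 hx] using hcone ‖x‖ (norm_pos_iff.2 hx) _ h
  calc ∫ x in T, f ‖x‖ ∂μ
      = ∫ x : ({0}ᶜ : Set E), T.indicator (fun x => f ‖x‖) x ∂μ.comap (↑) := by
        rw [← integral_indicator hT, integral_subtype_comap (measurableSet_singleton _).compl,
          restrict_compl_singleton]
    _ = ∫ p, S.indicator 1 p.1 * f p.2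
          ∂μ.toSphere.prod (.volumeIoiPow (Module.finrank ℝ E - 1)) := by
        rw [← μ.measurePreserving_homeomorphUnitSphereProd.integral_comp
          (Homeomorph.measurableEmbedding _)]
        refine integral_congr_ae (Eventually.of_forall fun x => ?_)
        have := hmem x.1 x.2
        by_cases hx : x.1 ∈ T <;>
          simp [S, hx, indicator, homeomorphUnitSphereProd_apply_fst_coe, this]
    _ = μ.toSphere.real S * ∫ r : Ioi (0 : ℝ), f r ∂.volumeIoiPow (Module.finrank ℝ E - 1) := by
        rw [integral_prod_mul (S.indicator 1) (fun r : Ioi (0 : ℝ) => f r),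
          integral_indicator_one hS]
    _ = _ := by
      simp only [Measure.volumeIoiPow, ENNReal.ofReal]
      rw [integral_withDensity_eq_integral_smul,
        integral_subtype_comap measurableSet_Ioi fun a ↦ Real.toNNReal (a ^ _) • f a,
        setIntegral_congr_fun measurableSet_Ioi fun x hx ↦ ?_]
      · rw [NNReal.smul_def, Real.coe_toNNReal _ (pow_nonneg hx.out.le _), smul_eq_mul]
      · exact (measurable_subtype_coe.pow_const _).real_toNNReal

end Polar

section Gaussian

variable {n : ℕ}

def gaussDensity (n : ℕ) (x : EuclideanSpace ℝ (Fin n)) : ℝ :=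
  (2 * π) ^ (-(n : ℝ) / 2) * exp (-‖x‖ ^ 2 / 2)

lemma gauss_eq_setIntegral_gaussDensity (B : Set (EuclideanSpace ℝ (Fin n))) :
    gauss B = ∫ x in B, gaussDensity n x := rfl

lemma gaussDensity_nonneg (x : EuclideanSpace ℝ (Fin n)) : 0 ≤ gaussDensity n x := by
  unfold gaussDensity
  positivity

lemma gauss_nonneg (B : Set (EuclideanSpace ℝ (Fin n))) : 0 ≤ gauss B :=
  integral_nonneg gaussDensity_nonneg

lemma gaussDensity_add (y u : EuclideanSpace ℝ (Fin n)) :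
    gaussDensity n (y + u) = gaussDensity n y * exp (-⟪y, u⟫ - ‖u‖ ^ 2 / 2) := by
  rw [gaussDensity, gaussDensity, mul_assoc, ← exp_add, norm_add_sq_real]
  ring_nf

lemma integrable_gaussDensity_mul_exp_norm (t : ℝ) :
    Integrable fun y : EuclideanSpace ℝ (Fin n) => gaussDensity n y * exp (t * ‖y‖) := by
  have hbase : Integrable fun y : EuclideanSpace ℝ (Fin n) => exp (-(1 / 4) * ‖y‖ ^ 2) := by
    refine (GaussianFourier.integrable_cexp_neg_mul_sq_norm_add (V := EuclideanSpace ℝ (Fin n))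
      (b := 1 / 4) (by norm_num) 0 0).norm.congr (Eventually.of_forall fun v => ?_)
    dsimp only
    rw [Complex.norm_exp]
    simp [← Complex.ofReal_pow]
  refine (hbase.const_mul ((2 * π) ^ (-(n : ℝ) / 2) * exp (t ^ 2))).mono'
    (Continuous.aestronglyMeasurable (by unfold gaussDensity; fun_prop))
    (Eventually.of_forall fun y => ?_)
  rw [norm_of_nonneg (mul_nonneg (gaussDensity_nonneg y) (exp_pos _).le)]
  calc gaussDensity n y * exp (t * ‖y‖)
      = (2 * π) ^ (-(n : ℝ) / 2) * exp (-‖y‖ ^ 2 / 2 + t * ‖y‖) := by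
        rw [gaussDensity, mul_assoc, ← exp_add]
    _ ≤ (2 * π) ^ (-(n : ℝ) / 2) * exp (t ^ 2 + -(1 / 4) * ‖y‖ ^ 2) := by
        refine mul_le_mul_of_nonneg_left (exp_le_exp.2 ?_) (by positivity)
        nlinarith [sq_nonneg (t - ‖y‖ / 2)]
    _ = _ := by rw [exp_add, mul_assoc]

lemma integrable_gaussDensity : Integrable (gaussDensity n) := by
  simpa using integrable_gaussDensity_mul_exp_norm (n := n) 0

lemma gauss_mono {A B : Set (EuclideanSpace ℝ (Fin n))} (h : A ⊆ B) : gauss A ≤ gauss B :=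
  setIntegral_mono_set integrable_gaussDensity.integrableOn
    (Eventually.of_forall gaussDensity_nonneg) h.eventuallyLE

lemma gauss_image_add_right (T : Set (EuclideanSpace ℝ (Fin n))) (u : EuclideanSpace ℝ (Fin n)) :
    gauss ((· + u) '' T) = ∫ y in T, gaussDensity n (y + u) :=
  (measurePreserving_add_right volume u).setIntegral_image_emb (measurableEmbedding_addRight u) _ T

lemma integrable_gaussDensity_add (u : EuclideanSpace ℝ (Fin n)) :
    Integrable fun y => gaussDensity n (y + u) :=
  ((measurePreserving_add_right volume u).integrable_comp
    integrable_gaussDensity.aestronglyMeasurable).2 integrable_gaussDensity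

lemma exists_setIntegral_gaussDensity_mul_exp_norm {N : ℕ}
    {T : Set (EuclideanSpace ℝ (Fin (N + 1)))} (hT : MeasurableSet T)
    (hcone : ∀ c : ℝ, 0 < c → ∀ x ∈ T, c • x ∈ T) :
    ∃ C, 0 ≤ C ∧ gauss T = C * halfGaussMoment N 0 ∧
      ∀ t, ∫ y in T, gaussDensity (N + 1) y * exp (t * ‖y‖) =
        C * (exp (t ^ 2 / 2) * halfGaussMoment N t) := by
  set C := volume.toSphere.real (Subtype.val ⁻¹' T) * (2 * π) ^ (-((N + 1 : ℕ) : ℝ) / 2)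
  have hint (t : ℝ) : ∫ y in T, gaussDensity (N + 1) y * exp (t * ‖y‖) =
      C * (exp (t ^ 2 / 2) * halfGaussMoment N t) := by
    unfold gaussDensity
    rw [setIntegral_fun_norm_of_smul_mem volume hT hcone
      (fun r => (2 * π) ^ (-((N + 1 : ℕ) : ℝ) / 2) * exp (-r ^ 2 / 2) * exp (t * r)),
      finrank_euclideanSpace, Fintype.card_fin, add_tsub_cancel_right, halfGaussMoment, mul_assoc]
    congr 1
    rw [← integral_const_mul, ← integral_const_mul]
    refine setIntegral_congr_fun measurableSet_Ioi fun r _ => ?_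
    have h : exp (-r ^ 2 / 2) * exp (t * r) = exp (t ^ 2 / 2) * exp (-(r - t) ^ 2 / 2) := by
      rw [← exp_add, ← exp_add]
      ring_nf
    linear_combination (r ^ N * (2 * π) ^ (-((N + 1 : ℕ) : ℝ) / 2)) * h
  refine ⟨C, by positivity, ?_, hint⟩
  simpa [gauss_eq_setIntegral_gaussDensity] using hint 0

variable {T : Set (EuclideanSpace ℝ (Fin n))}

lemma norm_euclideanSpace_fin_zero (y : EuclideanSpace ℝ (Fin 0)) : ‖y‖ = 0 := by
  rw [Subsingleton.elim y 0, norm_zero]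

lemma gauss_mul_exp_le_setIntegral_gaussDensity_mul_exp (hT : MeasurableSet T)
    (hcone : ∀ c : ℝ, 0 < c → ∀ x ∈ T, c • x ∈ T) {τ : ℝ} (hτ : 0 ≤ τ) :
    gauss T * exp (-√n * τ) ≤ ∫ y in T, gaussDensity n y * exp (-τ * ‖y‖) := by
  cases n with
  | zero => simp [norm_euclideanSpace_fin_zero, gauss_eq_setIntegral_gaussDensity]
  | succ N =>
    obtain ⟨C, hC, hgauss, hint⟩ := exists_setIntegral_gaussDensity_mul_exp_norm hT hcone
    rw [hgauss, hint, neg_sq, mul_assoc, Nat.cast_succ]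
    exact mul_le_mul_of_nonneg_left (halfGaussMoment_zero_mul_exp_le N hτ) hC

lemma setIntegral_gaussDensity_mul_exp_le (hT : MeasurableSet T)
    (hcone : ∀ c : ℝ, 0 < c → ∀ x ∈ T, c • x ∈ T) {d : ℝ} (hd : 0 ≤ d) :
    ∫ y in T, gaussDensity n y * exp (d * ‖y‖) ≤ gauss T * exp (d ^ 2 / 2 + √n * d) := by
  cases n with
  | zero =>
    simp only [norm_euclideanSpace_fin_zero, mul_zero, exp_zero, mul_one, CharP.cast_eq_zero,
      sqrt_zero, zero_mul, add_zero]
    exact le_mul_of_one_le_right (gauss_nonneg T) (one_le_exp (by positivity))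
  | succ N =>
    obtain ⟨C, hC, hgauss, hint⟩ := exists_setIntegral_gaussDensity_mul_exp_norm hT hcone
    rw [hgauss, hint, exp_add, Nat.cast_succ]
    calc C * (exp (d ^ 2 / 2) * halfGaussMoment N d)
        ≤ C * (exp (d ^ 2 / 2) * (halfGaussMoment N 0 * exp (√(N + 1) * d))) := by
          gcongr
          exact halfGaussMoment_le_mul_exp N hd
      _ = _ := by ring

lemma gauss_mul_exp_le_gauss_image_add (hT : MeasurableSet T)
    (hcone : ∀ c : ℝ, 0 < c → ∀ x ∈ T, c • x ∈ T) (u : EuclideanSpace ℝ (Fin n)) :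
    gauss T * exp (-‖u‖ ^ 2 / 2 - ‖u‖ * √n) ≤ gauss ((· + u) '' T) := by
  calc gauss T * exp (-‖u‖ ^ 2 / 2 - ‖u‖ * √n)
      = exp (-‖u‖ ^ 2 / 2) * (gauss T * exp (-√n * ‖u‖)) := by
        rw [sub_eq_add_neg, exp_add]
        ring_nf
    _ ≤ exp (-‖u‖ ^ 2 / 2) * ∫ y in T, gaussDensity n y * exp (-‖u‖ * ‖y‖) := by
        gcongr
        exact gauss_mul_exp_le_setIntegral_gaussDensity_mul_exp hT hcone (norm_nonneg u)
    _ = ∫ y in T, exp (-‖u‖ ^ 2 / 2) * (gaussDensity n y * exp (-‖u‖ * ‖y‖)) :=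
        (integral_const_mul _ _).symm
    _ ≤ ∫ y in T, gaussDensity n (y + u) := by
        refine setIntegral_mono ((integrable_gaussDensity_mul_exp_norm _).const_mul _).integrableOn
          (integrable_gaussDensity_add u).integrableOn fun y => ?_
        rw [gaussDensity_add, mul_left_comm, ← exp_add]
        refine mul_le_mul_of_nonneg_left (exp_le_exp.2 ?_) (gaussDensity_nonneg y)
        nlinarith [real_inner_le_norm y u]
    _ = gauss ((· + u) '' T) := (gauss_image_add_right T u).symm

lemma gauss_image_add_le (hT : MeasurableSet T) (hcone : ∀ c : ℝ, 0 < c → ∀ x ∈ T, c • x ∈ T)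
    {u p : EuclideanSpace ℝ (Fin n)} (hp : p ∈ dualCone T) :
    gauss ((· + u) '' T) ≤ gauss T * exp (-‖u‖ ^ 2 / 2 + ‖u - p‖ ^ 2 / 2 + ‖u - p‖ * √n) := by
  calc gauss ((· + u) '' T) = ∫ y in T, gaussDensity n (y + u) := gauss_image_add_right T u
    _ ≤ ∫ y in T, exp (-‖u‖ ^ 2 / 2) * (gaussDensity n y * exp (‖u - p‖ * ‖y‖)) := by
        refine setIntegral_mono_on (integrable_gaussDensity_add u).integrableOn
          ((integrable_gaussDensity_mul_exp_norm _).const_mul _).integrableOn hT fun y hy => ?_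
        rw [gaussDensity_add, mul_left_comm, ← exp_add]
        refine mul_le_mul_of_nonneg_left (exp_le_exp.2 ?_) (gaussDensity_nonneg y)
        have hyp : 0 ≤ ⟪y, p⟫ := hp y hy
        have := neg_le_of_abs_le (abs_real_inner_le_norm y (u - p))
        rw [inner_sub_right] at this
        nlinarith
    _ = exp (-‖u‖ ^ 2 / 2) * ∫ y in T, gaussDensity n y * exp (‖u - p‖ * ‖y‖) :=
        integral_const_mul _ _
    _ ≤ exp (-‖u‖ ^ 2 / 2) * (gauss T * exp (‖u - p‖ ^ 2 / 2 + √n * ‖u - p‖)) := by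
        gcongr
        exact setIntegral_gaussDensity_mul_exp_le hT hcone (norm_nonneg _)
    _ = _ := by
        rw [add_assoc, exp_add (-‖u‖ ^ 2 / 2), mul_comm √n]
        ring

end Gaussian

section Cones

lemma infDist_eq_dist_of_forall_dist_le {α : Type*} [PseudoMetricSpace α] {K : Set α} {u p : α}
    (hp : p ∈ K) (hmin : ∀ a ∈ K, dist u p ≤ dist u a) : infDist u K = dist u p :=
  le_antisymm (infDist_le_dist_of_mem hp) ((le_infDist ⟨p, hp⟩).2 hmin)

variable {F : Type*} [NormedAddCommGroup F] [InnerProductSpace ℝ F]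

/-- The nearest point `p` satisfies `⟪p, u - p⟫ ≥ 0`: the variational inequality tested at `0`. -/
lemma norm_sq_add_norm_sub_sq_le_of_forall_dist_le {K : Set F} (hK : Convex ℝ K) (h0 : 0 ∈ K)
    {u p : F} (hp : p ∈ K) (hmin : ∀ a ∈ K, dist u p ≤ dist u a) :
    ‖p‖ ^ 2 + ‖u - p‖ ^ 2 ≤ ‖u‖ ^ 2 := by
  have hinf : ‖u - p‖ = ⨅ w : K, ‖u - w‖ := by
    simp_rw [← dist_eq_norm, ← infDist_eq_iInf]
    exact (infDist_eq_dist_of_forall_dist_le hp hmin).symm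
  have h := (norm_eq_iInf_iff_real_inner_le_zero hK hp).1 hinf 0 h0
  rw [zero_sub, inner_neg_right, real_inner_comm] at h
  rw [← add_sub_cancel p u, norm_add_sq_real, add_sub_cancel_left]
  linarith

def polyhedralCone {ι : Type*} (s : ι → F) : Set F := {y | ∀ i, 0 ≤ ⟪s i, y⟫}

namespace polyhedralCone

variable {ι : Type*} {s : ι → F}

lemma add_mem {x y : F} (hx : x ∈ polyhedralCone s) (hy : y ∈ polyhedralCone s) :
    x + y ∈ polyhedralCone s := fun i => by
  rw [inner_add_right]
  exact add_nonneg (hx i) (hy i)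

lemma smul_mem {c : ℝ} (hc : 0 ≤ c) {x : F} (hx : x ∈ polyhedralCone s) :
    c • x ∈ polyhedralCone s := fun i => by
  rw [real_inner_smul_right]
  exact mul_nonneg hc (hx i)

lemma isClosed : IsClosed (polyhedralCone s) := by
  simp only [polyhedralCone, ofPred_forall]
  exact isClosed_iInter fun i => isClosed_le continuous_const (continuous_const.inner continuous_id)

lemma image_add_subset_inter_add {W : Set F} {w wt : F} (hw : w ∈ W)
    (hwt : ∀ i, ⟪s i, wt⟫ = max ⟪s i, w⟫ 0) :
    (· + wt) '' polyhedralCone s ⊆ polyhedralCone s ∩ (polyhedralCone s + W) := by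
  have hwt_mem : wt ∈ polyhedralCone s := fun i => hwt i ▸ le_max_right _ _
  have hsub_mem : wt - w ∈ polyhedralCone s := fun i => by
    rw [inner_sub_right, hwt i, sub_nonneg]
    exact le_max_left _ _
  rintro _ ⟨y, hy, rfl⟩
  exact ⟨add_mem hy hwt_mem, y + (wt - w), add_mem hy hsub_mem, w, hw, by dsimp only; abel⟩

lemma inter_image_add_subset_image_add {x wt : F} (hwt : ∀ i, ⟪s i, wt⟫ = max ⟪s i, x⟫ 0) :
    polyhedralCone s ∩ ((· + x) '' polyhedralCone s) ⊆ (· + wt) '' polyhedralCone s := by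
  rintro _ ⟨hyx, y, hy, rfl⟩
  refine ⟨y + x - wt, fun i => ?_, sub_add_cancel _ _⟩
  have hi := hyx i
  rw [inner_add_right] at hi
  rw [inner_sub_right, inner_add_right, hwt i]
  rcases le_total ⟪s i, x⟫ 0 with h | h
  · rw [max_eq_right h]
    linarith
  · rw [max_eq_left h]
    linarith [hy i]

end polyhedralCone

end Cones

lemma convex_dualCone {n : ℕ} (V : Set (EuclideanSpace ℝ (Fin n))) : Convex ℝ (dualCone V) :=
  fun _ hx _ hy a b ha hb _ v hv => by
    rw [inner_add_right, real_inner_smul_right, real_inner_smul_right]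
    exact add_nonneg (mul_nonneg ha (hx v hv)) (mul_nonneg hb (hy v hv))

lemma zero_mem_dualCone {n : ℕ} (V : Set (EuclideanSpace ℝ (Fin n))) : 0 ∈ dualCone V :=
  fun _ _ => (inner_zero_right _).ge

/-- `wt` encodes the representer `w̃ = S⁻¹ (S w)₊` through `S w̃ = (S w)₊`. -/
theorem stmt11_general {n : ℕ} (Q : Set (EuclideanSpace ℝ (Fin n)))
    (z : EuclideanSpace ℝ (Fin n))
    -- the inward unit facet normals of `T = N(z)`, forming an invertible matrix `S`
    (s : Fin n → EuclideanSpace ℝ (Fin n))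
    (hT : normalCone Q z = {y | ∀ i, 0 ≤ ⟪s i, y⟫})
    (D : Set (EuclideanSpace ℝ (Fin n))) (ψ : EuclideanSpace ℝ (Fin n) → ℝ)
    (ε : ℝ) :
    (∀ w ∈ subdiffScaled ε D ψ z, ∀ wt : EuclideanSpace ℝ (Fin n),
      (∀ i, ⟪s i, wt⟫ = max ⟪s i, w⟫ 0) →
      gauss (normalCone Q z) * Real.exp (-‖wt‖ ^ 2 / 2 - ‖wt‖ * Real.sqrt n) ≤
        gauss (normalCone Q z ∩ (normalCone Q z + subdiffScaled ε D ψ z))) ∧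
    (∀ v : EuclideanSpace ℝ (Fin n), HasGradientAt ψ v z →
      ∀ wt : EuclideanSpace ℝ (Fin n), (∀ i, ⟪s i, wt⟫ = max ⟪s i, ε • v⟫ 0) →
      ∀ p : EuclideanSpace ℝ (Fin n), p ∈ dualCone (normalCone Q z) →
        (∀ a ∈ dualCone (normalCone Q z), dist wt p ≤ dist wt a) →
      gauss (normalCone Q z ∩ ((· + ε • v) '' normalCone Q z)) ≤
        gauss (normalCone Q z) *
          Real.exp (-‖p‖ ^ 2 / 2 +
            infDist wt (dualCone (normalCone Q z)) * Real.sqrt n)) := by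
  rw [show normalCone Q z = polyhedralCone s from hT]
  have hTm : MeasurableSet (polyhedralCone s) := polyhedralCone.isClosed.measurableSet
  have hcone (c : ℝ) (hc : 0 < c) (x) (hx : x ∈ polyhedralCone s) : c • x ∈ polyhedralCone s :=
    polyhedralCone.smul_mem hc.le hx
  refine ⟨fun w hw wt hwt => ?_, fun v _ wt hwt p hp hmin => ?_⟩
  · calc _ ≤ gauss ((· + wt) '' polyhedralCone s) := gauss_mul_exp_le_gauss_image_add hTm hcone wt
      _ ≤ _ := gauss_mono (polyhedralCone.image_add_subset_inter_add hw hwt)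
  · have hproj := norm_sq_add_norm_sub_sq_le_of_forall_dist_le (convex_dualCone _)
      (zero_mem_dualCone _) hp hmin
    rw [infDist_eq_dist_of_forall_dist_le hp hmin, dist_eq_norm]
    calc _ ≤ gauss ((· + wt) '' polyhedralCone s) :=
          gauss_mono (polyhedralCone.inter_image_add_subset_image_add hwt)
      _ ≤ gauss (polyhedralCone s) * exp (-‖wt‖ ^ 2 / 2 + ‖wt - p‖ ^ 2 / 2 + ‖wt - p‖ * √n) :=
          gauss_image_add_le hTm hcone hp
      _ ≤ _ := by
          gcongr
          · exact gauss_nonneg _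
          · linarith

/-- Bound via representer vectors at a nondegenerate vertex. The rows `s i` of the
invertible matrix `S` are the inward unit facet normals of `T = N(z)`, and the representer
`w̃` of `w` is characterized by `S w̃ = (S w)₊`. -/
theorem stmt11 {n m : ℕ} (A : Fin m → EuclideanSpace ℝ (Fin n)) (b : Fin m → ℝ)
    (Q : Set (EuclideanSpace ℝ (Fin n)))
    (hQ : Q = {x | ∀ i, ⟪A i, x⟫ ≤ b i}) (hne : Q.Nonempty)
    (z : EuclideanSpace ℝ (Fin n)) (hz : z ∈ Set.extremePoints ℝ Q)
    -- nondegeneracy: exactly `n` active constraints, with linearly independent rows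
    (hcard : {i | ⟪A i, z⟫ = b i}.ncard = n)
    (hind : LinearIndependent ℝ (fun i : {i : Fin m // ⟪A i, z⟫ = b i} => A i.1))
    -- the inward unit facet normals of `T = N(z)`, forming an invertible matrix `S`
    (s : Fin n → EuclideanSpace ℝ (Fin n)) (hs : ∀ i, ‖s i‖ = 1)
    (hsind : LinearIndependent ℝ s)
    (hT : normalCone Q z = {y | ∀ i, 0 ≤ ⟪s i, y⟫})
    (D : Set (EuclideanSpace ℝ (Fin n))) (ψ : EuclideanSpace ℝ (Fin n) → ℝ)
    (hDne : D.Nonempty) (hψ : ConvexOn ℝ D ψ)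
    (ε : ℝ) (hε : 0 ≤ ε) :
    (∀ w ∈ subdiffScaled ε D ψ z, ∀ wt : EuclideanSpace ℝ (Fin n),
      (∀ i, ⟪s i, wt⟫ = max ⟪s i, w⟫ 0) →
      gauss (normalCone Q z) * Real.exp (-‖wt‖ ^ 2 / 2 - ‖wt‖ * Real.sqrt n) ≤
        gauss (normalCone Q z ∩ (normalCone Q z + subdiffScaled ε D ψ z))) ∧
    (∀ v : EuclideanSpace ℝ (Fin n), HasGradientAt ψ v z →
      ∀ wt : EuclideanSpace ℝ (Fin n), (∀ i, ⟪s i, wt⟫ = max ⟪s i, ε • v⟫ 0) →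
      ∀ p : EuclideanSpace ℝ (Fin n), p ∈ dualCone (normalCone Q z) →
        (∀ a ∈ dualCone (normalCone Q z), dist wt p ≤ dist wt a) →
      gauss (normalCone Q z ∩ ((· + ε • v) '' normalCone Q z)) ≤
        gauss (normalCone Q z) *
          Real.exp (-‖p‖ ^ 2 / 2 +
            infDist wt (dualCone (normalCone Q z)) * Real.sqrt n)) :=
  stmt11_general Q z s hT D ψ ε
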